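/- Let p ∈ ℝ³ \ {0} and let v ∈ ℝ³ not be a scalar multiple of p. Then {q ∈ H₂ : q² ∈ F_{(p,v)}} = {q ∈ H₂ : q(p) = 0 and ⟨∇q(p), v⟩ = 0}; that is, q² ∈ F_{(p,v)} if and only if q vanishes at p and the line spanned by p and v is contained in the tangent space of q at p. -/
import Mathlib


open MvPolynomial

noncomputable section

/-- The space of ternary (3-variable) real polynomials. `H d` corresponds to the
homogeneous polynomials of degree `d` via the predicate `IsHomogeneous`. -/
abbrev MvP : Type := MvPolynomial (Fin 3) ℝ

/-- The cone `P` of nonnegative ternary quartics. -/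
def Pcone : Set MvP :=
  {f | f.IsHomogeneous 4 ∧ ∀ a : Fin 3 → ℝ, 0 ≤ eval a f}

/-- `F` is a face of the cone `P`. -/
def IsFace (F : Set MvP) : Prop :=
  F ⊆ Pcone ∧
  (∀ a ∈ F, ∀ b ∈ F, a + b ∈ F) ∧
  (∀ c : ℝ, 0 ≤ c → ∀ a ∈ F, c • a ∈ F) ∧
  (∀ a ∈ Pcone, ∀ b ∈ Pcone, a + b ∈ F → a ∈ F ∧ b ∈ F)

/-- `J_F = {q ∈ H₂ : q² ∈ F}`. -/
def Jset (F : Set MvP) : Set MvP :=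
  {q | q.IsHomogeneous 2 ∧ q ^ 2 ∈ F}

/-- The univariate polynomial `t ↦ f (p + t • v)`. -/
def lineP (p v : Fin 3 → ℝ) (f : MvP) : Polynomial ℝ :=
  MvPolynomial.aeval (fun i => Polynomial.C (p i) + Polynomial.C (v i) * Polynomial.X) f

/-- The face `F_p = {f ∈ P : f(p) = 0}`. -/
def Fp (p : Fin 3 → ℝ) : Set MvP := {f ∈ Pcone | eval p f = 0}

/-- The face `F_{(p,v)}`: members of `P` vanishing at `p` whose restriction to the line
`t ↦ p + t v` has vanishing `t²`-coefficient. -/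
def Fpv (p v : Fin 3 → ℝ) : Set MvP :=
  {f ∈ Pcone | eval p f = 0 ∧ (lineP p v f).coeff 2 = 0}

/-- The gradient `∇f(p)`. -/
def grad (f : MvP) (p : Fin 3 → ℝ) : Fin 3 → ℝ := fun i => eval p (pderiv i f)

/-- The Hessian matrix `(Hess f)(p)`. -/
def hess (f : MvP) (p : Fin 3 → ℝ) : Matrix (Fin 3) (Fin 3) ℝ :=
  Matrix.of fun i j => eval p (pderiv i (pderiv j f))

/-- `I_p = {f ∈ H₄ : f(p) = 0, ∇f(p) = 0}`. -/
def Ip (p : Fin 3 → ℝ) : Set MvP :=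
  {f | f.IsHomogeneous 4 ∧ eval p f = 0 ∧ grad f p = 0}

/-- `I_{(p,v)}`. -/
def Ipv (p v : Fin 3 → ℝ) : Set MvP :=
  {f | f.IsHomogeneous 4 ∧ eval p f = 0 ∧ grad f p = 0 ∧
    (hess f p).mulVec v = 0 ∧ (lineP p v f).coeff 3 = 0}


lemma lineP_coeff_zero (p v : Fin 3 → ℝ) (f : MvP) :
    (lineP p v f).coeff 0 = eval p f := by
  induction f using MvPolynomial.induction_on with
  | C a => simp [lineP]
  | add f g hf hg => simp [lineP, map_add, Polynomial.coeff_add] at *; rw [hf, hg]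
  | mul_X f j hf =>
      simp only [lineP, map_mul, aeval_X, map_mul, eval_X, Polynomial.mul_coeff_zero] at *
      simp [hf, mul_add, Polynomial.coeff_add]

lemma lineP_coeff_one (p v : Fin 3 → ℝ) (f : MvP) :
    (lineP p v f).coeff 1 = ∑ i, eval p (pderiv i f) * v i := by
  induction f using MvPolynomial.induction_on with
  | C a => simp [lineP]
  | add f g hf hg => simp [lineP, map_add, Polynomial.coeff_add, hf, hg, add_mul,
      Finset.sum_add_distrib] at *
  | mul_X f j hf =>
      have := lineP_coeff_zero p v f
      simp only [lineP, map_mul, aeval_X] at *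
      rw [mul_add, Polynomial.coeff_add, Polynomial.coeff_mul_C, ← mul_assoc,
        Polynomial.coeff_mul_X, Polynomial.coeff_mul_C, hf, this]
      simp [pderiv_mul, Finset.sum_add_distrib, Finset.mul_sum, add_mul, mul_comm,
        mul_assoc, mul_left_comm, Pi.single_apply, Finset.sum_ite_eq']
      rw [show (∑ x : Fin 3, v x * ((eval p) (if j = x then f else 0) + p j * (eval p) ((pderiv x) f)))
        = ∑ x : Fin 3, ((if j = x then v x * eval p f else 0) + v x * (p j * eval p (pderiv x f))) by
          apply Finset.sum_congr rfl; intro x _; split <;> simp [mul_add]]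
      rw [Finset.sum_add_distrib, Finset.sum_ite_eq Finset.univ j (fun x => v x * eval p f)]
      simp [mul_comm, mul_left_comm, add_comm]

lemma coeff_two_sq (h : Polynomial ℝ) :
    (h ^ 2).coeff 2 = h.coeff 0 * h.coeff 2 + h.coeff 1 * h.coeff 1 + h.coeff 2 * h.coeff 0 := by
  rw [sq, Polynomial.coeff_mul, Finset.Nat.sum_antidiagonal_eq_sum_range_succ_mk]
  simp [Finset.sum_range_succ]

/-- `{q ∈ H₂ : q² ∈ F_{(p,v)}} = {q ∈ H₂ : q(p) = 0 and ⟨∇q(p), v⟩ = 0}`. -/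
theorem stmt_4 (p v : Fin 3 → ℝ) (hp : p ≠ 0) (hv : ∀ c : ℝ, v ≠ c • p) :
    {q : MvP | q.IsHomogeneous 2 ∧ q ^ 2 ∈ Fpv p v} =
    {q : MvP | q.IsHomogeneous 2 ∧ eval p q = 0 ∧ ∑ i, grad q p i * v i = 0} := by
  ext q
  simp only [Set.mem_setOf_eq, Fpv, Pcone, Set.mem_setOf_eq]
  have hsq : lineP p v (q ^ 2) = (lineP p v q) ^ 2 := map_pow _ _ _
  have h0 := lineP_coeff_zero p v q
  have h1 := lineP_coeff_one p v q
  have hc2 : (lineP p v (q ^ 2)).coeff 2 =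
      eval p q * (lineP p v q).coeff 2 + (∑ i, grad q p i * v i) * (∑ i, grad q p i * v i) +
      (lineP p v q).coeff 2 * eval p q := by
    rw [hsq, coeff_two_sq, h0, h1]; rfl
  constructor
  · rintro ⟨hH, ⟨-, -⟩, he, hcf⟩
    have hq0 : eval p q = 0 := by
      have : (eval p q) ^ 2 = 0 := by rw [← map_pow]; exact he
      exact pow_eq_zero_iff (by norm_num) |>.mp this
    refine ⟨hH, hq0, ?_⟩
    rw [hc2, hq0] at hcf
    nlinarith [sq_nonneg (∑ i, grad q p i * v i)]
  · rintro ⟨hH, hq0, hg⟩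
    refine ⟨hH, ⟨⟨by simpa using hH.pow 2, fun a => by rw [map_pow]; positivity⟩, ?_, ?_⟩⟩
    · rw [map_pow, hq0]; ring
    · rw [hc2, hq0, hg]; ring
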